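/- arXiv:1003.3454 — 4 statements merged into one kernel-verified Lean document; each statement's English description precedes it below -/
import Mathlib

section
/- Let X be a proper non-compact metric space and ξ a coarse filter on X. Then either ξ is the trivial filter {X}, or ξ is finer than the Fréchet filter (the filter of sets with relatively compact complement). -/
/-!
If `ξ ≠ ⊤`, some `F ∈ ξ` misses a point `p`. Since `d(x, Fᶜ) ≤ d(x, p)`, the coarse shrinkings
`F^{(r)}` avoid the closed balls `closedBall p r`, so `ξ` contains the complement of every bounded
set, in particular of every compact set.
-/

/-- A filter `ξ` on a metric space is *coarse* if for every `F ∈ ξ` and every `r > 0`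
the set `F^{(r)} = {x : d(x, Fᶜ) > r}` also belongs to `ξ`. -/
def IsCoarseFilter {X : Type*} [MetricSpace X] (ξ : Filter X) : Prop :=
  ∀ F ∈ ξ, ∀ r : ℝ, 0 < r → {x : X | ENNReal.ofReal r < EMetric.infEdist x Fᶜ} ∈ ξ

namespace IsCoarseFilter

variable {X : Type*} [MetricSpace X] {ξ : Filter X}

theorem compl_closedBall_mem (hξ : IsCoarseFilter ξ) {F : Set X} (hF : F ∈ ξ) {p : X}
    (hp : p ∉ F) {r : ℝ} (hr : 0 < r) : (Metric.closedBall p r)ᶜ ∈ ξ := by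
  refine Filter.mem_of_superset (hξ F hF r hr) fun x hx => ?_
  have hrx : ENNReal.ofReal r < edist x p := hx.trans_le (Metric.infEDist_le_edist_of_mem hp)
  rw [edist_dist, ENNReal.ofReal_lt_ofReal_iff_of_nonneg hr.le] at hrx
  simpa using hrx

theorem le_cobounded (hξ : IsCoarseFilter ξ) (hξ_ne : ξ ≠ ⊤) : ξ ≤ Bornology.cobounded X := by
  obtain ⟨F, hF, p, hp⟩ : ∃ F ∈ ξ, ∃ p, p ∉ F := by
    by_contra! h
    exact hξ_ne (top_unique fun s hs => Filter.mem_top.2 (Set.eq_univ_of_forall (h s hs)))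
  refine (Metric.hasBasis_cobounded_compl_closedBall p).ge_iff.2 fun r _ => ?_
  have hr : (0 : ℝ) < max r 1 := one_pos.trans_le (le_max_right r 1)
  refine Filter.mem_of_superset (hξ.compl_closedBall_mem hF hp hr) ?_
  exact Set.compl_subset_compl.2 (Metric.closedBall_subset_closedBall (le_max_left r 1))

end IsCoarseFilter

theorem stmt7_general {X : Type*} [MetricSpace X]
    (ξ : Filter X) (hξ : IsCoarseFilter ξ) :
    ξ = ⊤ ∨ ξ ≤ Filter.cocompact X :=
  or_iff_not_imp_left.2 fun hξ_ne => (hξ.le_cobounded hξ_ne).trans Metric.cobounded_le_cocompact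

theorem stmt7 {X : Type*} [MetricSpace X] [ProperSpace X] (hX : ¬ CompactSpace X)
    (ξ : Filter X) (hξ : IsCoarseFilter ξ) :
    ξ = ⊤ ∨ ξ ≤ Filter.cocompact X :=
  stmt7_general ξ hξ
end

section
/- Let X be a locally compact group. A filter ξ on X is coarse (for every F ∈ ξ and every compact K ⊂ X there exists G ∈ ξ with KG ⊂ F) if and only if ξ is round (the sets VG with V a neighborhood of e and G ∈ ξ form a basis of ξ) and left invariant (xF ∈ ξ whenever x ∈ X and F ∈ ξ). -/
/-!
A coarse filter is round because a compact neighbourhood of `e` can serve as `K`, and left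
invariant because `K = {x⁻¹}` gives `G ⊆ xF`. Conversely, if `VG ⊆ F` and `ξ` is left invariant,
cover the compact set `K` by finitely many right translates `Vt₁, …, Vtₙ`; then
`G' = t₁⁻¹G ∩ ⋯ ∩ tₙ⁻¹G ∈ ξ` and `KG' ⊆ V{t₁, …, tₙ}G' ⊆ VG ⊆ F`.
-/

open Pointwise Topology

theorem IsCompact.exists_finset_subset_mul {X : Type*} [Group X] [TopologicalSpace X]
    [ContinuousConstSMul Xᵐᵒᵖ X] {K V : Set X} (hK : IsCompact K) (hV : V ∈ 𝓝 (1 : X)) :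
    ∃ t : Finset X, K ⊆ V * t := by
  obtain ⟨t, -, hKt⟩ :=
    hK.elim_nhds_subcover (V * {·}) fun k _ => mul_singleton_mem_nhds_of_nhds_one k hV
  refine ⟨t, hKt.trans ?_⟩
  rw [← Set.mul_iUnion₂]
  exact Set.mul_subset_mul_left fun x hx => by simpa using hx

theorem Set.finset_mul_iInter_inv_smul_subset {X : Type*} [Group X] (t : Finset X) (G : Set X) :
    (t : Set X) * ⋂ x ∈ t, x⁻¹ • G ⊆ G := by
  rintro _ ⟨x, hx, g, hg, rfl⟩
  simpa [Set.mem_smul_set_iff_inv_smul_mem] using Set.mem_iInter₂.mp hg x hx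

namespace Filter

variable {X : Type*}

def IsCoarse [Mul X] [TopologicalSpace X] (ξ : Filter X) : Prop :=
  ∀ F ∈ ξ, ∀ K : Set X, IsCompact K → ∃ G ∈ ξ, K * G ⊆ F

def IsRound [Mul X] [One X] [TopologicalSpace X] (ξ : Filter X) : Prop :=
  ∀ F ∈ ξ, ∃ V ∈ 𝓝 (1 : X), ∃ G ∈ ξ, V * G ⊆ F

def IsLeftInvariant [Mul X] (ξ : Filter X) : Prop :=
  ∀ x : X, ∀ F ∈ ξ, x • F ∈ ξ

theorem IsCoarse.isRound [Mul X] [One X] [TopologicalSpace X] [WeaklyLocallyCompactSpace X]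
    {ξ : Filter X} (h : ξ.IsCoarse) : ξ.IsRound := by
  intro F hF
  obtain ⟨K, hK, hK1⟩ := exists_compact_mem_nhds (1 : X)
  exact ⟨K, hK1, h F hF K hK⟩

theorem IsCoarse.isLeftInvariant [Group X] [TopologicalSpace X] {ξ : Filter X}
    (h : ξ.IsCoarse) : ξ.IsLeftInvariant := by
  intro x F hF
  obtain ⟨G, hG, hGF⟩ := h F hF {x⁻¹} isCompact_singleton
  rw [← smul_eq_mul, Set.singleton_smul, Set.smul_set_subset_iff_subset_inv_smul_set, inv_inv] at hGF
  exact mem_of_superset hG hGF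

theorem IsRound.isCoarse [Group X] [TopologicalSpace X] [ContinuousConstSMul Xᵐᵒᵖ X]
    {ξ : Filter X} (hr : ξ.IsRound) (hl : ξ.IsLeftInvariant) : ξ.IsCoarse := by
  intro F hF K hK
  obtain ⟨V, hV, G, hG, hVG⟩ := hr F hF
  obtain ⟨t, hKt⟩ := hK.exists_finset_subset_mul hV
  refine ⟨⋂ x ∈ t, x⁻¹ • G, (biInter_finset_mem t).mpr fun x _ => hl x⁻¹ G hG, ?_⟩
  calc K * ⋂ x ∈ t, x⁻¹ • G ⊆ V * ((t : Set X) * ⋂ x ∈ t, x⁻¹ • G) := by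
        rw [← mul_assoc]; exact Set.mul_subset_mul_right hKt
    _ ⊆ V * G := Set.mul_subset_mul_left (Set.finset_mul_iInter_inv_smul_subset t G)
    _ ⊆ F := hVG

theorem isCoarse_iff_isRound_and_isLeftInvariant [Group X] [TopologicalSpace X]
    [IsTopologicalGroup X] [WeaklyLocallyCompactSpace X] (ξ : Filter X) :
    ξ.IsCoarse ↔ ξ.IsRound ∧ ξ.IsLeftInvariant :=
  ⟨fun h => ⟨h.isRound, h.isLeftInvariant⟩, fun h => h.1.isCoarse h.2⟩

end Filter

theorem stmt9 {X : Type*} [Group X] [TopologicalSpace X] [IsTopologicalGroup X]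
    [LocallyCompactSpace X] (ξ : Filter X) :
    (∀ F ∈ ξ, ∀ K : Set X, IsCompact K → ∃ G ∈ ξ, K * G ⊆ F) ↔
      ((∀ F ∈ ξ, ∃ V ∈ nhds (1 : X), ∃ G ∈ ξ, V * G ⊆ F) ∧
        (∀ x : X, ∀ F ∈ ξ, (x • F) ∈ ξ)) :=
  ξ.isCoarse_iff_isRound_and_isLeftInvariant
end

section
/- Let X be a metric space and ξ a filter on X. For bounded uniformly continuous φ: X → ℂ, lim_ξ φ = 0 holds if and only if lim_{ξ°} φ = 0, where ξ° is the round envelope of ξ, i.e., the filter generated by the sets F_{(r)} = {x : d(x,F) ≤ r} for F ∈ ξ and r > 0. -/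
/-!
Every generator `F_(r)` of `ξ°` contains `F ∈ ξ`, so `ξ° ⊆ ξ` and convergence along `ξ°`
implies convergence along `ξ`. Conversely, if `φ` is uniformly continuous with modulus `δ` for `ε / 2`
and `|φ| < ε / 2` on `F ∈ ξ`, then every point of `F_(δ/2)` is `δ`-close to a point of `F`,
so `|φ| < ε` on `F_(δ/2) ∈ ξ°`.
-/

open Filter Metric Topology

section RoundEnvelope

variable {X : Type*}

/-- The round envelope `ξ°`; `cthickening r F` is the closed neighbourhood `F_(r)`. -/
def Filter.roundEnvelope [PseudoEMetricSpace X] (ξ : Filter X) : Filter X :=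
  generate {S | ∃ F ∈ ξ, ∃ r : ℝ, 0 < r ∧ S = cthickening r F}

theorem Filter.cthickening_mem_roundEnvelope [PseudoEMetricSpace X] {ξ : Filter X} {F : Set X}
    (hF : F ∈ ξ) {r : ℝ} (hr : 0 < r) : cthickening r F ∈ ξ.roundEnvelope :=
  GenerateSets.basic ⟨F, hF, r, hr, rfl⟩

theorem Filter.le_roundEnvelope [PseudoEMetricSpace X] (ξ : Filter X) : ξ ≤ ξ.roundEnvelope := by
  rw [roundEnvelope, le_generate_iff]
  rintro S ⟨F, hF, r, -, rfl⟩
  exact mem_of_superset hF (self_subset_cthickening F)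

theorem UniformContinuous.tendsto_roundEnvelope [PseudoMetricSpace X] {Y : Type*}
    [PseudoMetricSpace Y] {f : X → Y} (hf : UniformContinuous f) {ξ : Filter X} {c : Y}
    (h : Tendsto f ξ (𝓝 c)) : Tendsto f ξ.roundEnvelope (𝓝 c) := by
  rw [Metric.tendsto_nhds] at h ⊢
  intro ε hε
  obtain ⟨δ, hδ, hfδ⟩ := Metric.uniformContinuous_iff.mp hf (ε / 2) (half_pos hε)
  have hthick : cthickening (δ / 2) {x | dist (f x) c < ε / 2} ∈ ξ.roundEnvelope :=
    cthickening_mem_roundEnvelope (h (ε / 2) (half_pos hε)) (half_pos hδ)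
  refine mem_of_superset hthick fun x hx => ?_
  obtain ⟨y, hy, hxy⟩ :=
    mem_thickening_iff.mp (cthickening_subset_thickening' hδ (half_lt_self hδ) _ hx)
  calc dist (f x) c ≤ dist (f x) (f y) + dist (f y) c := dist_triangle _ _ _
    _ < ε / 2 + ε / 2 := add_lt_add (hfδ hxy) hy
    _ = ε := add_halves ε

end RoundEnvelope

theorem stmt16_general {X : Type*} [MetricSpace X] (ξ : Filter X) (φ : X → ℂ)
    (hφu : UniformContinuous φ) :
    Filter.Tendsto φ ξ (nhds 0) ↔
      Filter.Tendsto φ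
        (Filter.generate {S : Set X | ∃ F ∈ ξ, ∃ r : ℝ, 0 < r ∧
          S = {x : X | EMetric.infEdist x F ≤ ENNReal.ofReal r}}) (nhds 0) :=
  ⟨hφu.tendsto_roundEnvelope, fun h => h.mono_left ξ.le_roundEnvelope⟩

theorem stmt16 {X : Type*} [MetricSpace X] (ξ : Filter X) (φ : X → ℂ)
    (hφu : UniformContinuous φ) (hφb : ∃ C, ∀ x, ‖φ x‖ ≤ C) :
    Filter.Tendsto φ ξ (nhds 0) ↔
      Filter.Tendsto φ
        (Filter.generate {S : Set X | ∃ F ∈ ξ, ∃ r : ℝ, 0 < r ∧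
          S = {x : X | EMetric.infEdist x F ≤ ENNReal.ofReal r}}) (nhds 0) :=
  stmt16_general ξ φ hφu
end

section
/- Let (X,d,μ) be a metric measure space satisfying inf_x μ(B_x(1/2)) > 0 and sup_x μ(B_x(r)) < ∞ for all r. Let T be a bounded controlled operator on L²(X,μ), i.e., there is d(T) ≥ 0 such that 𝟙_F T 𝟙_G = 0 whenever F,G are closed with d(F,G) > d(T). Then ‖T‖ ≤ N(d(T)+1)^{1/2} · sup_{x∈X} ‖𝟙_{B_x(1)} T‖, where N(r) = V(2r+2)/inf_x μ(B_x(1/2)) and V(r) = sup_x μ(B_x(r)). -/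
/-!
Cover `X` by the unit balls around a maximal `1`-separated set `Z`. The balls `B(z, 1/2)`,
`z ∈ Z`, are disjoint of measure `≥ ν`, so a point lies in at most `N = V(2(d+1)+2)/ν` of the
enlarged balls `B(z, d+2)`. Since `T` has propagation `≤ d`, `𝟙_{B(z,1)} T f` only depends on
`𝟙_{B(z,d+2)} f`, so with `S = sup_x ‖𝟙_{B(x,1)} T‖`,
`‖T f‖² ≤ ∑_z ‖𝟙_{B(z,1)} T f‖² ≤ S² ∑_z ‖𝟙_{B(z,d+2)} f‖² ≤ S² N ‖f‖²`.
-/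

open MeasureTheory Metric ENNReal
open scoped NNReal

namespace Metric

variable {X : Type*} [MetricSpace X] {ε : ℝ≥0} {S : Set X}

theorem exists_isSeparated_isCover_univ (ε : ℝ≥0) :
    ∃ S : Set X, IsSeparated ε S ∧ IsCover ε Set.univ S := by
  obtain ⟨S, hS⟩ := zorn_subset {S : Set X | IsSeparated ε S} fun c hc hchain =>
    ⟨⋃₀ c, hchain.pairwise_sUnion.2 hc, fun _ => Set.subset_sUnion_of_mem⟩
  exact ⟨S, hS.prop, .of_maximal_isSeparated ⟨⟨Set.subset_univ S, hS.prop⟩,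
    fun T hT hST => hS.le_of_ge hT.2 hST⟩⟩

theorem IsSeparated.pairwiseDisjoint_closedBall (hS : IsSeparated ε S) :
    S.PairwiseDisjoint fun z => closedBall z (ε / 2) := by
  intro a ha b hb hab
  refine Set.disjoint_left.2 fun y hya hyb => (hS ha hb hab).not_ge ?_
  have hya : dist y a ≤ ε / 2 := hya
  have hyb : dist y b ≤ ε / 2 := hyb
  rw [edist_dist, ← ENNReal.ofReal_coe_nnreal]
  exact ENNReal.ofReal_le_ofReal (by linarith [dist_triangle_left a b y])

theorem IsSeparated.countable [TopologicalSpace.SeparableSpace X] (hε : ε ≠ 0)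
    (hS : IsSeparated ε S) : S.Countable :=
  (hS.pairwiseDisjoint_closedBall.mono fun _ => ball_subset_closedBall).countable_of_isOpen
    (fun _ _ => isOpen_ball) fun z _ => ⟨z, mem_ball_self (by positivity)⟩

theorem ofReal_lt_iInf_edist_closedBall_compl_ball {d a b : ℝ}
    (hd : 0 ≤ d) (hab : d + a < b) (z : X) :
    ENNReal.ofReal d < ⨅ x ∈ closedBall z a, ⨅ y ∈ (ball z b)ᶜ, edist x y := by
  refine ((ENNReal.ofReal_lt_ofReal_iff (by linarith)).2 (by linarith : d < b - a)).trans_le ?_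
  refine le_iInf₂ fun x hx => le_iInf₂ fun y hy => ?_
  have hx : dist x z ≤ a := hx
  have hy : b ≤ dist y z := not_lt.1 hy
  rw [edist_dist]
  exact ENNReal.ofReal_le_ofReal (by linarith [dist_triangle y x z, dist_comm x y])

variable [MeasurableSpace X] [OpensMeasurableSpace X] {μ : Measure X} {m : ℝ≥0∞}

theorem IsSeparated.encard_mul_le_measure_closedBall (hS : IsSeparated ε S)
    (hm : ∀ z ∈ S, m ≤ μ (closedBall z (ε / 2))) {x : X} {R : ℝ} (hSR : S ⊆ closedBall x R) :
    S.encard * m ≤ μ (closedBall x (R + ε / 2)) :=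
  calc S.encard * m = ∑' _ : S, m := (ENNReal.tsum_set_const S m).symm
    _ ≤ ∑' z : S, μ (closedBall z (ε / 2)) := ENNReal.tsum_le_tsum fun z => hm z z.2
    _ ≤ μ (⋃ z : S, closedBall z (ε / 2)) :=
      tsum_meas_le_meas_iUnion_of_disjoint μ (fun _ => measurableSet_closedBall)
        fun a b hab => hS.pairwiseDisjoint_closedBall a.2 b.2 (Subtype.coe_ne_coe.2 hab)
    _ ≤ μ (closedBall x (R + ε / 2)) := by
      refine measure_mono (Set.iUnion_subset fun z => closedBall_subset_closedBall' ?_)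
      linarith [mem_closedBall.1 (hSR z.2)]

end Metric

section BallMultiplicity

variable {X : Type*} [MetricSpace X] [MeasurableSpace X] {μ : Measure X}

theorem isLocallyFiniteMeasure_of_measure_closedBall_ne_top {δ : ℝ} (hδ : 0 < δ)
    (h : ∀ x, μ (closedBall x δ) ≠ ∞) : IsLocallyFiniteMeasure μ :=
  ⟨fun x => ⟨closedBall x δ, closedBall_mem_nhds x hδ, (h x).lt_top⟩⟩

variable [ProperSpace X] [BorelSpace X]

theorem Metric.IsSeparated.encard_setOf_mem_ball_le {ν : ℝ} (hν : 0 < ν)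
    (hν' : ∀ x : X, ν ≤ (μ (closedBall x (1/2))).toReal)
    {V : ℝ → ℝ} (hV : ∀ (x : X) (r : ℝ), (μ (closedBall x r)).toReal ≤ V r)
    {Z : Set X} (hZ : IsSeparated 1 Z) (x : X) {r R : ℝ} (hrR : r + 1/2 ≤ R) :
    {z : Z | x ∈ ball (z : X) r}.encard ≤ ENNReal.ofReal (V R / ν) := by
  have : IsLocallyFiniteMeasure μ :=
    isLocallyFiniteMeasure_of_measure_closedBall_ne_top one_half_pos fun z =>
      (ENNReal.toReal_pos_iff.1 (hν.trans_le (hν' z))).2.ne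
  have hsub : Subtype.val '' {z : Z | x ∈ ball (z : X) r} ⊆ Z ∩ closedBall x r := by
    rintro _ ⟨z, hz, rfl⟩
    exact ⟨z.2, mem_closedBall_comm.1 (ball_subset_closedBall hz)⟩
  have hpack := (hZ.subset (Set.inter_subset_left (t := closedBall x r))
    ).encard_mul_le_measure_closedBall (μ := μ) (m := ENNReal.ofReal ν) (fun z _ => by
      simpa using ENNReal.ofReal_le_of_le_toReal (hν' z)) Set.inter_subset_right
  have hball : μ (closedBall x (r + (1 : ℝ≥0) / 2)) ≤ ENNReal.ofReal (V R) := by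
    rw [ENNReal.le_ofReal_iff_toReal_le measure_closedBall_lt_top.ne
      (ENNReal.toReal_nonneg.trans (hV x R))]
    refine le_trans (ENNReal.toReal_mono measure_closedBall_lt_top.ne
      (measure_mono (closedBall_subset_closedBall ?_))) (hV x R)
    simpa using hrR
  rw [← Subtype.val_injective.encard_image, ENNReal.ofReal_div_of_pos hν,
    ENNReal.le_div_iff_mul_le (by simp [hν]) (by simp)]
  calc _ ≤ (Z ∩ closedBall x r).encard * ENNReal.ofReal ν := by gcongr
    _ ≤ ENNReal.ofReal (V R) := hpack.trans hball

end BallMultiplicity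

theorem tsum_indicator_apply_eq_encard_mul {ι α : Type*} (A : ι → Set α) (g : α → ℝ≥0∞)
    (x : α) : ∑' i, (A i).indicator g x = {i | x ∈ A i}.encard * g x := by
  rw [← ENNReal.tsum_set_const, tsum_subtype {i | x ∈ A i} fun _ => g x]
  rfl

section AlmostOrthogonality

variable {X E ι : Type*} [MeasurableSpace X] [NormedAddCommGroup E] {μ : Measure X}
  [Countable ι] {A B : ι → Set X} {p : ℝ≥0}

theorem tsum_eLpNorm_indicator_rpow (hp : p ≠ 0) (hA : ∀ i, MeasurableSet (A i)) {f : X → E}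
    (hf : AEStronglyMeasurable f μ) :
    ∑' i, eLpNorm ((A i).indicator f) p μ ^ (p : ℝ) =
      ∫⁻ x, {i | x ∈ A i}.encard * ‖f x‖ₑ ^ (p : ℝ) ∂μ := by
  have hp' : (0 : ℝ) < p := by positivity
  have key : ∀ i x, ‖(A i).indicator f x‖ₑ ^ (p : ℝ) =
      (A i).indicator (fun y => ‖f y‖ₑ ^ (p : ℝ)) x := fun i x => by
    by_cases hx : x ∈ A i <;> simp [hx, hp']
  simp_rw [eLpNorm_nnreal_pow_eq_lintegral hp, key]
  rw [← lintegral_tsum fun i => (hf.enorm.pow_const _).indicator (hA i)]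
  simp_rw [tsum_indicator_apply_eq_encard_mul]

theorem eLpNorm_rpow_le_tsum_eLpNorm_indicator_rpow (hp : p ≠ 0) (hA : ∀ i, MeasurableSet (A i))
    (hcov : ∀ x, ∃ i, x ∈ A i) {g : X → E} (hg : AEStronglyMeasurable g μ) :
    eLpNorm g p μ ^ (p : ℝ) ≤ ∑' i, eLpNorm ((A i).indicator g) p μ ^ (p : ℝ) := by
  rw [tsum_eLpNorm_indicator_rpow hp hA hg, eLpNorm_nnreal_pow_eq_lintegral hp]
  refine lintegral_mono fun x => le_mul_of_one_le_left' ?_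
  rw [← ENat.toENNReal_one, ENat.toENNReal_le, Set.one_le_encard_iff_nonempty]
  exact hcov x

theorem tsum_eLpNorm_indicator_rpow_le (hp : p ≠ 0) (hB : ∀ i, MeasurableSet (B i)) {n : ℝ≥0∞}
    (hmult : ∀ x, {i | x ∈ B i}.encard ≤ n) {f : X → E} (hf : AEStronglyMeasurable f μ) :
    ∑' i, eLpNorm ((B i).indicator f) p μ ^ (p : ℝ) ≤ n * eLpNorm f p μ ^ (p : ℝ) := by
  rw [tsum_eLpNorm_indicator_rpow hp hB hf, eLpNorm_nnreal_pow_eq_lintegral hp,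
    ← lintegral_const_mul'' n (hf.enorm.pow_const _)]
  exact lintegral_mono fun x => mul_le_mul_left (hmult x) _

theorem eLpNorm_rpow_le_of_forall_eLpNorm_indicator_le (hp : p ≠ 0)
    (hA : ∀ i, MeasurableSet (A i)) (hB : ∀ i, MeasurableSet (B i)) (hcov : ∀ x, ∃ i, x ∈ A i)
    {n : ℝ≥0∞} (hmult : ∀ x, {i | x ∈ B i}.encard ≤ n) {s : ℝ≥0∞} {g f : X → E}
    (hg : AEStronglyMeasurable g μ) (hf : AEStronglyMeasurable f μ)
    (hloc : ∀ i, eLpNorm ((A i).indicator g) p μ ≤ s * eLpNorm ((B i).indicator f) p μ) :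
    eLpNorm g p μ ^ (p : ℝ) ≤ n * (s * eLpNorm f p μ) ^ (p : ℝ) :=
  calc eLpNorm g p μ ^ (p : ℝ)
      ≤ ∑' i, eLpNorm ((A i).indicator g) p μ ^ (p : ℝ) :=
        eLpNorm_rpow_le_tsum_eLpNorm_indicator_rpow hp hA hcov hg
    _ ≤ ∑' i, s ^ (p : ℝ) * eLpNorm ((B i).indicator f) p μ ^ (p : ℝ) :=
        ENNReal.tsum_le_tsum fun i => by
          rw [← ENNReal.mul_rpow_of_nonneg _ _ p.coe_nonneg]; gcongr; exact hloc i
    _ = s ^ (p : ℝ) * ∑' i, eLpNorm ((B i).indicator f) p μ ^ (p : ℝ) := ENNReal.tsum_mul_left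
    _ ≤ s ^ (p : ℝ) * (n * eLpNorm f p μ ^ (p : ℝ)) := by
        gcongr; exact tsum_eLpNorm_indicator_rpow_le hp hB hmult hf
    _ = n * (s * eLpNorm f p μ) ^ (p : ℝ) := by
        rw [ENNReal.mul_rpow_of_nonneg _ _ p.coe_nonneg]; ring

end AlmostOrthogonality

section ControlledOperators

variable {X E 𝕜 : Type*} [MeasurableSpace X] [NormedAddCommGroup E] [NontriviallyNormedField 𝕜]
  [NormedSpace 𝕜 E] {p : ℝ≥0∞} [Fact (1 ≤ p)]

def IsMulIndicatorFamily (μ : Measure X) (M : Set X → (Lp E p μ →L[𝕜] Lp E p μ)) : Prop :=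
  ∀ A : Set X, MeasurableSet A → ∀ f : Lp E p μ, ⇑(M A f) =ᵐ[μ] A.indicator ⇑f

def IsControlled [PseudoEMetricSpace X] {μ : Measure X} (M : Set X → (Lp E p μ →L[𝕜] Lp E p μ))
    (T : Lp E p μ →L[𝕜] Lp E p μ) (d : ℝ) : Prop :=
  ∀ F G : Set X, IsClosed F → IsClosed G →
    ENNReal.ofReal d < ⨅ x ∈ F, ⨅ y ∈ G, edist x y → (M F).comp (T.comp (M G)) = 0

variable {μ : Measure X} {M : Set X → (Lp E p μ →L[𝕜] Lp E p μ)} {A : Set X}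

namespace IsMulIndicatorFamily

variable (hM : IsMulIndicatorFamily μ M)
include hM

theorem enorm_apply (hA : MeasurableSet A) (f : Lp E p μ) :
    ‖M A f‖ₑ = eLpNorm (A.indicator f) p μ := by
  rw [Lp.enorm_def, eLpNorm_congr_ae (hM A hA f)]

theorem norm_le_one (hA : MeasurableSet A) : ‖M A‖ ≤ 1 :=
  (M A).opNorm_le_bound zero_le_one fun f => by
    rw [one_mul, ← ENNReal.ofReal_le_ofReal_iff (norm_nonneg f), ofReal_norm, ofReal_norm,
      hM.enorm_apply hA, Lp.enorm_def]
    exact eLpNorm_indicator_le _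

theorem apply_add_apply_compl (hA : MeasurableSet A) (f : Lp E p μ) :
    M A f + M Aᶜ f = f := by
  refine Lp.ext ?_
  filter_upwards [Lp.coeFn_add (M A f) (M Aᶜ f), hM A hA f, hM Aᶜ hA.compl f] with x h h₁ h₂
  rw [h, Pi.add_apply, h₁, h₂, Set.indicator_self_add_compl_apply]

end IsMulIndicatorFamily

variable [MetricSpace X] [OpensMeasurableSpace X] {T : Lp E p μ →L[𝕜] Lp E p μ} {d : ℝ}

theorem IsControlled.apply_eq_comp_apply (hT : IsControlled M T d)
    (hM : IsMulIndicatorFamily μ M) {F U : Set X} (hF : IsClosed F) (hU : IsOpen U)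
    (hFU : ENNReal.ofReal d < ⨅ x ∈ F, ⨅ y ∈ Uᶜ, edist x y) (f : Lp E p μ) :
    M F (T f) = (M F).comp T (M U f) := by
  have hvanish : M F (T (M Uᶜ f)) = 0 :=
    congrArg (fun L => L f) (hT F Uᶜ hF hU.isClosed_compl hFU)
  conv_lhs => rw [← hM.apply_add_apply_compl hU.measurableSet f]
  rw [map_add, map_add, hvanish, add_zero, ContinuousLinearMap.comp_apply]

theorem IsControlled.eLpNorm_indicator_closedBall_le (hT : IsControlled M T d)
    (hM : IsMulIndicatorFamily μ M) (hd : 0 ≤ d) {a b : ℝ} (hab : d + a < b) (z : X)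
    (f : Lp E p μ) :
    eLpNorm ((closedBall z a).indicator (T f)) p μ ≤
      ‖(M (closedBall z a)).comp T‖ₑ * eLpNorm ((ball z b).indicator f) p μ := by
  rw [← hM.enorm_apply measurableSet_closedBall, ← hM.enorm_apply measurableSet_ball,
    hT.apply_eq_comp_apply hM isClosed_closedBall isOpen_ball
      (ofReal_lt_iInf_edist_closedBall_compl_ball hd hab z)]
  exact ContinuousLinearMap.le_opENorm _ _

end ControlledOperators

theorem ContinuousLinearMap.opNorm_le_sqrt_mul_of_enorm_sq_le {𝕜 E F : Type*}
    [NontriviallyNormedField 𝕜] [NormedAddCommGroup E] [NormedAddCommGroup F] [NormedSpace 𝕜 E]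
    [NormedSpace 𝕜 F] (T : E →L[𝕜] F) {N s : ℝ} (hs : 0 ≤ s)
    (h : ∀ f, ‖T f‖ₑ ^ 2 ≤ ENNReal.ofReal N * (ENNReal.ofReal s * ‖f‖ₑ) ^ 2) :
    ‖T‖ ≤ √N * s := by
  have hN : ENNReal.ofReal N = ENNReal.ofReal √N ^ 2 := by
    rw [← ENNReal.ofReal_pow (Real.sqrt_nonneg N), Real.sq_sqrt', ENNReal.ofReal_max,
      ENNReal.ofReal_zero, max_zero]
  refine T.opNorm_le_bound (by positivity) fun f => ?_
  rw [← ENNReal.ofReal_le_ofReal_iff (by positivity), ofReal_norm, ENNReal.ofReal_mul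
    (by positivity), ENNReal.ofReal_mul (Real.sqrt_nonneg N), ofReal_norm, mul_assoc,
    ← ENNReal.pow_le_pow_left_iff two_ne_zero, mul_pow, ← hN]
  exact h f

theorem stmt18 {X : Type*} [MetricSpace X] [ProperSpace X]
    [MeasurableSpace X] [BorelSpace X] (μ : Measure X)
    (ν : ℝ) (hν : 0 < ν) (hν' : ∀ x : X, ν ≤ (μ (closedBall x (1/2))).toReal)
    (V : ℝ → ℝ) (hV : ∀ (x : X) (r : ℝ), (μ (closedBall x r)).toReal ≤ V r)
    (M : Set X → (Lp ℂ 2 μ →L[ℂ] Lp ℂ 2 μ))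
    (hM : ∀ A : Set X, MeasurableSet A → ∀ f : Lp ℂ 2 μ,
      ⇑(M A f) =ᵐ[μ] A.indicator ⇑f)
    (T : Lp ℂ 2 μ →L[ℂ] Lp ℂ 2 μ) (dT : ℝ) (hdT : 0 ≤ dT)
    (hctrl : ∀ F G : Set X, IsClosed F → IsClosed G →
      (ENNReal.ofReal dT < ⨅ x ∈ F, ⨅ y ∈ G, edist x y) →
      (M F).comp (T.comp (M G)) = 0) :
    ‖T‖ ≤ Real.sqrt (V (2*(dT+1)+2) / ν) *
      ⨆ x : X, ‖(M (closedBall x 1)).comp T‖ := by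
  have hM : IsMulIndicatorFamily μ M := hM
  have hctrl : IsControlled M T dT := hctrl
  set S := ⨆ x : X, ‖(M (closedBall x 1)).comp T‖
  have hS (x : X) : ‖(M (closedBall x 1)).comp T‖ₑ ≤ ENNReal.ofReal S := by
    rw [← ofReal_norm]
    refine ENNReal.ofReal_le_ofReal
      (le_ciSup (f := fun x => ‖(M (closedBall x 1)).comp T‖) ⟨‖T‖, ?_⟩ x)
    rintro _ ⟨y, rfl⟩
    exact (ContinuousLinearMap.opNorm_comp_le _ _).trans
      (mul_le_of_le_one_left (norm_nonneg T) (hM.norm_le_one measurableSet_closedBall))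
  obtain ⟨Z, hZ, hZcov⟩ := exists_isSeparated_isCover_univ (X := X) 1
  have : Countable Z := (hZ.countable one_ne_zero).to_subtype
  have hcov (x : X) : ∃ z : Z, x ∈ closedBall (z : X) 1 := by
    obtain ⟨z, hz, hxz⟩ := hZcov (Set.mem_univ x)
    exact ⟨⟨z, hz⟩, by simpa [edist_dist] using hxz⟩
  refine T.opNorm_le_sqrt_mul_of_enorm_sq_le (Real.iSup_nonneg fun x => norm_nonneg _)
    fun f => ?_
  have hsq := eLpNorm_rpow_le_of_forall_eLpNorm_indicator_le (p := 2) two_ne_zero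
    (fun _ => measurableSet_closedBall) (fun _ => measurableSet_ball) hcov
    (fun x => hZ.encard_setOf_mem_ball_le hν hν' hV x (r := dT + 2) (R := 2 * (dT + 1) + 2)
      (by linarith))
    (Lp.aestronglyMeasurable (T f)) (Lp.aestronglyMeasurable f) fun z => by
      simpa using (hctrl.eLpNorm_indicator_closedBall_le hM hdT (by linarith : dT + 1 < dT + 2)
        z f).trans (by gcongr; exact hS z)
  simpa [Lp.enorm_def] using hsq
end
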